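/- arXiv:1009.5290 — 2 statements merged into one kernel-verified Lean document; each statement's English description precedes it below -/
import Mathlib

section
/- Let G_A = (V_A, E_A) and G_B = (V_B, E_B) be finite directed graphs and let F denote the neighbor matching update operator, which sends a matrix x : V_A × V_B → ℝ to the matrix F(x) with F(x)_{ij} = (s_in(i,j;x) + s_out(i,j;x))/2. If x, y : V_A × V_B → ℝ satisfy x_{pq} ≤ y_{pq} for all p ∈ V_A, q ∈ V_B, then F(x)_{ij} ≤ F(y)_{ij} for all i ∈ V_A, j ∈ V_B; that is, the update operator is monotone with respect to the entrywise order. -/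
open Finset Filter Topology

/-- A matching of finite sets `A` and `B`: a set of pairs, each with first
component in `A` and second in `B`, such that no element of either set occurs
in more than one pair. -/
def IsMatching {α β : Type*} (A : Finset α) (B : Finset β) (M : Finset (α × β)) : Prop :=
  (∀ p ∈ M, p.1 ∈ A ∧ p.2 ∈ B) ∧
  (∀ p ∈ M, ∀ q ∈ M, p.1 = q.1 → p = q) ∧
  (∀ p ∈ M, ∀ q ∈ M, p.2 = q.2 → p = q)

open Classical in
/-- The optimal matching weight `W(A,B,w)`: the maximum over all matchings `M`
of `A` and `B` of the total weight `∑ (a,b) ∈ M, w a b` (the empty matching is allowed). -/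
noncomputable def optWeight {α β : Type*} (A : Finset α) (B : Finset β)
    (w : α → β → ℝ) : ℝ :=
  ((A ×ˢ B).powerset.filter fun M => IsMatching A B M).sup'
    ⟨∅, by simp [IsMatching]⟩ (fun M => ∑ p ∈ M, w p.1 p.2)

open Classical in
/-- The in-neighbors of node `i` in the directed graph with nodes `V` and edges `E`. -/
noncomputable def inNbrs {α : Type*} (V : Finset α) (E : Finset (α × α)) (i : α) : Finset α :=
  V.filter fun p => (p, i) ∈ E

open Classical in
/-- The out-neighbors of node `i` in the directed graph with nodes `V` and edges `E`. -/
noncomputable def outNbrs {α : Type*} (V : Finset α) (E : Finset (α × α)) (i : α) : Finset α :=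
  V.filter fun q => (i, q) ∈ E

/-- In-similarity of `i ∈ V_A` and `j ∈ V_B` computed from the similarity matrix `x`:
`W(In(i), In(j), x) / max(id(i), id(j))` when `max(id(i), id(j)) > 0`, and `1` otherwise. -/
noncomputable def sIn {α β : Type*} (VA : Finset α) (EA : Finset (α × α))
    (VB : Finset β) (EB : Finset (β × β)) (x : α → β → ℝ) (i : α) (j : β) : ℝ :=
  if max (inNbrs VA EA i).card (inNbrs VB EB j).card = 0 then 1
  else optWeight (inNbrs VA EA i) (inNbrs VB EB j) x /
    (max (inNbrs VA EA i).card (inNbrs VB EB j).card : ℝ)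

/-- Out-similarity of `i ∈ V_A` and `j ∈ V_B` computed from the similarity matrix `x`:
`W(Out(i), Out(j), x) / max(od(i), od(j))` when `max(od(i), od(j)) > 0`, and `1` otherwise. -/
noncomputable def sOut {α β : Type*} (VA : Finset α) (EA : Finset (α × α))
    (VB : Finset β) (EB : Finset (β × β)) (x : α → β → ℝ) (i : α) (j : β) : ℝ :=
  if max (outNbrs VA EA i).card (outNbrs VB EB j).card = 0 then 1
  else optWeight (outNbrs VA EA i) (outNbrs VB EB j) x /
    (max (outNbrs VA EA i).card (outNbrs VB EB j).card : ℝ)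

/-- The neighbor matching update operator: `F(x)_{ij} = (s_in(i,j;x) + s_out(i,j;x)) / 2`. -/
noncomputable def nmUpdate {α β : Type*} (VA : Finset α) (EA : Finset (α × α))
    (VB : Finset β) (EB : Finset (β × β)) (x : α → β → ℝ) : α → β → ℝ :=
  fun i j => (sIn VA EA VB EB x i j + sOut VA EA VB EB x i j) / 2

/-- The neighbor matching iteration: `x⁰_{ij} = 1` and `x^{k+1} = F(x^k)`. -/
noncomputable def nmIter {α β : Type*} (VA : Finset α) (EA : Finset (α × α))
    (VB : Finset β) (EB : Finset (β × β)) : ℕ → α → β → ℝ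
  | 0 => fun _ _ => 1
  | k + 1 => nmUpdate VA EA VB EB (nmIter VA EA VB EB k)

lemma optWeight_mono {α β : Type*} (A : Finset α) (B : Finset β)
    (w w' : α → β → ℝ) (h : ∀ a ∈ A, ∀ b ∈ B, w a b ≤ w' a b) :
    optWeight A B w ≤ optWeight A B w' := by
  classical
  unfold optWeight
  apply Finset.sup'_le
  intro M hM
  simp only [Finset.mem_filter, Finset.mem_powerset] at hM
  have hmem : M ∈ (A ×ˢ B).powerset.filter fun M => IsMatching A B M := by
    simp [hM.1, hM.2]
  refine le_trans ?_ (Finset.le_sup' (fun M => ∑ p ∈ M, w' p.1 p.2) hmem)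
  apply Finset.sum_le_sum
  intro p hp
  have := hM.1 hp
  rw [Finset.mem_product] at this
  exact h p.1 this.1 p.2 this.2

lemma sIn_mono {α β : Type*} (VA : Finset α) (EA : Finset (α × α))
    (VB : Finset β) (EB : Finset (β × β))
    (x y : α → β → ℝ) (hxy : ∀ p ∈ VA, ∀ q ∈ VB, x p q ≤ y p q) (i : α) (j : β) :
    sIn VA EA VB EB x i j ≤ sIn VA EA VB EB y i j := by
  classical
  unfold sIn
  split
  · exact le_refl 1
  · rename_i h
    have hc : (0:ℝ) < (max (inNbrs VA EA i).card (inNbrs VB EB j).card : ℕ) := by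
      exact_mod_cast Nat.pos_of_ne_zero h
    push_cast at hc ⊢
    gcongr
    exact optWeight_mono _ _ _ _ fun a ha b hb =>
      hxy a (Finset.filter_subset _ _ ha) b (Finset.filter_subset _ _ hb)

lemma sOut_mono {α β : Type*} (VA : Finset α) (EA : Finset (α × α))
    (VB : Finset β) (EB : Finset (β × β))
    (x y : α → β → ℝ) (hxy : ∀ p ∈ VA, ∀ q ∈ VB, x p q ≤ y p q) (i : α) (j : β) :
    sOut VA EA VB EB x i j ≤ sOut VA EA VB EB y i j := by
  classical
  unfold sOut
  split
  · exact le_refl 1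
  · rename_i h
    have hc : (0:ℝ) < (max (outNbrs VA EA i).card (outNbrs VB EB j).card : ℕ) := by
      exact_mod_cast Nat.pos_of_ne_zero h
    push_cast at hc ⊢
    gcongr
    exact optWeight_mono _ _ _ _ fun a ha b hb =>
      hxy a (Finset.filter_subset _ _ ha) b (Finset.filter_subset _ _ hb)

/-- The neighbor matching update operator is monotone with respect to the
entrywise order: if `x_{pq} ≤ y_{pq}` for all `p ∈ V_A`, `q ∈ V_B`, then
`F(x)_{ij} ≤ F(y)_{ij}` for all `i ∈ V_A`, `j ∈ V_B`. -/
theorem nmUpdate_mono {α β : Type*} (VA : Finset α) (EA : Finset (α × α))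
    (VB : Finset β) (EB : Finset (β × β))
    (hEA : EA ⊆ VA ×ˢ VA) (hEB : EB ⊆ VB ×ˢ VB)
    (x y : α → β → ℝ) (hxy : ∀ p ∈ VA, ∀ q ∈ VB, x p q ≤ y p q) :
    ∀ i ∈ VA, ∀ j ∈ VB,
      nmUpdate VA EA VB EB x i j ≤ nmUpdate VA EA VB EB y i j := by
  intro i _ j _
  unfold nmUpdate
  gcongr (?_ + ?_)/2
  · exact sIn_mono VA EA VB EB x y hxy i j
  · exact sOut_mono VA EA VB EB x y hxy i j
end

section
/- Let G_A = (V_A, E_A) and G_B = (V_B, E_B) be finite directed graphs and let f : V_A → V_B be an isomorphism between them. Then for every k ≥ 0 and every node i ∈ V_A, the neighbor matching iteration satisfies x^k_{i f(i)} = 1. -/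
open Finset Filter Topology

open Classical in
lemma matching_mem_aux {α β : Type*} {A : Finset α} {B : Finset β} {M : Finset (α × β)}
    (h1 : M ⊆ A ×ˢ B) (h2 : IsMatching A B M) :
    M ∈ ((A ×ˢ B).powerset.filter fun M => IsMatching A B M) := by
  simp [Finset.mem_filter, Finset.mem_powerset, h1, h2]

lemma le_optWeight {α β : Type*} (A : Finset α) (B : Finset β) (w : α → β → ℝ)
    (M : Finset (α × β)) (h1 : M ⊆ A ×ˢ B) (h2 : IsMatching A B M) :
    ∑ p ∈ M, w p.1 p.2 ≤ optWeight A B w := by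
  rw [optWeight]
  exact Finset.le_sup' (fun M => ∑ p ∈ M, w p.1 p.2) (matching_mem_aux h1 h2)

lemma optWeight_nonneg {α β : Type*} (A : Finset α) (B : Finset β) (w : α → β → ℝ) :
    0 ≤ optWeight A B w := by
  have := le_optWeight A B w ∅ (by simp) (by simp [IsMatching])
  simpa using this

lemma optWeight_le_card {α β : Type*} (A : Finset α) (B : Finset β) (w : α → β → ℝ)
    (hw : ∀ a b, w a b ≤ 1) : optWeight A B w ≤ (A.card : ℝ) := by
  classical
  rw [optWeight]
  apply Finset.sup'_le
  intro M hM
  rw [Finset.mem_filter] at hM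
  obtain ⟨hsub, hmatch⟩ := hM
  calc ∑ p ∈ M, w p.1 p.2 ≤ ∑ p ∈ M, 1 := Finset.sum_le_sum fun p _ => hw p.1 p.2
    _ = (M.card : ℝ) := by simp
    _ ≤ (A.card : ℝ) := by
        have : M.card ≤ A.card := by
          apply Finset.card_le_card_of_injOn Prod.fst
            (fun p hp => (hmatch.1 p hp).1)
          intro p hp q hq h
          exact hmatch.2.1 p (Finset.mem_coe.mp hp) q (Finset.mem_coe.mp hq) h
        exact_mod_cast this

lemma sVal_bdd {α β : Type*} (A : Finset α) (B : Finset β) (x : α → β → ℝ)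
    (hx1 : ∀ a b, x a b ≤ 1) :
    0 ≤ (if max A.card B.card = 0 then (1:ℝ)
          else optWeight A B x / (max A.card B.card : ℝ)) ∧
    (if max A.card B.card = 0 then (1:ℝ)
          else optWeight A B x / (max A.card B.card : ℝ)) ≤ 1 := by
  split
  · exact ⟨zero_le_one, le_refl 1⟩
  · next h =>
    have hcast : ((A.card : ℝ) ⊔ (B.card : ℝ)) = ((max A.card B.card : ℕ) : ℝ) :=
      (Nat.cast_max A.card B.card).symm
    have hpos : (0:ℝ) < ((max A.card B.card : ℕ) : ℝ) := by
      exact_mod_cast Nat.pos_of_ne_zero h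
    constructor
    · rw [show ((A.card : ℝ) ⊔ (B.card : ℝ)) = ((max A.card B.card : ℕ) : ℝ) from hcast]
      exact div_nonneg (optWeight_nonneg A B x) hpos.le
    · rw [show ((A.card : ℝ) ⊔ (B.card : ℝ)) = ((max A.card B.card : ℕ) : ℝ) from hcast]
      rw [div_le_one hpos]
      calc optWeight A B x ≤ (A.card : ℝ) := optWeight_le_card A B x hx1
        _ ≤ ((max A.card B.card : ℕ) : ℝ) := by exact_mod_cast le_max_left _ _

lemma nmIter_bdd {α β : Type*} (VA : Finset α) (EA : Finset (α × α))
    (VB : Finset β) (EB : Finset (β × β)) :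
    ∀ (k : ℕ) (i : α) (j : β), 0 ≤ nmIter VA EA VB EB k i j ∧ nmIter VA EA VB EB k i j ≤ 1 := by
  intro k
  induction k with
  | zero => intro i j; simp [nmIter]
  | succ k ih =>
    intro i j
    have hx1 : ∀ a b, nmIter VA EA VB EB k a b ≤ 1 := fun a b => (ih a b).2
    have hIn : 0 ≤ sIn VA EA VB EB (nmIter VA EA VB EB k) i j ∧
        sIn VA EA VB EB (nmIter VA EA VB EB k) i j ≤ 1 :=
      sVal_bdd (inNbrs VA EA i) (inNbrs VB EB j) (nmIter VA EA VB EB k) hx1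
    have hOut : 0 ≤ sOut VA EA VB EB (nmIter VA EA VB EB k) i j ∧
        sOut VA EA VB EB (nmIter VA EA VB EB k) i j ≤ 1 :=
      sVal_bdd (outNbrs VA EA i) (outNbrs VB EB j) (nmIter VA EA VB EB k) hx1
    constructor
    · show 0 ≤ (sIn VA EA VB EB (nmIter VA EA VB EB k) i j +
        sOut VA EA VB EB (nmIter VA EA VB EB k) i j) / 2
      linarith [hIn.1, hOut.1]
    · show (sIn VA EA VB EB (nmIter VA EA VB EB k) i j +
        sOut VA EA VB EB (nmIter VA EA VB EB k) i j) / 2 ≤ 1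
      linarith [hIn.2, hOut.2]

lemma optWeight_image {α β : Type*} [DecidableEq α] [DecidableEq β] (A : Finset α) (f : α → β) (x : α → β → ℝ)
    (hinj : Set.InjOn f ↑A) (hx1 : ∀ a b, x a b ≤ 1) (hx : ∀ a ∈ A, x a (f a) = 1) :
    optWeight A (A.image f) x = (A.card : ℝ) := by
  classical
  apply le_antisymm (optWeight_le_card _ _ _ hx1)
  have hsub : A.image (fun a => (a, f a)) ⊆ A ×ˢ A.image f := by
    intro p hp
    obtain ⟨a, ha, rfl⟩ := Finset.mem_image.mp hp
    exact Finset.mem_product.mpr ⟨ha, Finset.mem_image_of_mem f ha⟩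
  have hmatch : IsMatching A (A.image f) (A.image (fun a => (a, f a))) := by
    refine ⟨fun p hp => Finset.mem_product.mp (hsub hp), ?_, ?_⟩
    · intro p hp q hq h
      obtain ⟨a, ha, rfl⟩ := Finset.mem_image.mp hp
      obtain ⟨b, hb, rfl⟩ := Finset.mem_image.mp hq
      simp_all
    · intro p hp q hq h
      obtain ⟨a, ha, rfl⟩ := Finset.mem_image.mp hp
      obtain ⟨b, hb, rfl⟩ := Finset.mem_image.mp hq
      have : a = b := hinj ha hb h
      simp_all
  have hle := le_optWeight A (A.image f) x (A.image (fun a => (a, f a))) hsub hmatch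
  have hsum : ∑ p ∈ A.image (fun a => (a, f a)), x p.1 p.2 = (A.card : ℝ) := by
    rw [Finset.sum_image (by intro a _ b _ h; exact congrArg Prod.fst h)]
    rw [Finset.sum_congr rfl (fun a ha => hx a ha)]
    simp
  rw [hsum] at hle
  exact hle

/-- If `f : V_A → V_B` is an isomorphism of the directed graphs `G_A` and `G_B`,
then every iterate of the neighbor matching iteration satisfies
`x^k_{i f(i)} = 1` for all `i ∈ V_A`. -/
theorem nmIter_isomorphism {α β : Type*} (VA : Finset α) (EA : Finset (α × α))
    (VB : Finset β) (EB : Finset (β × β))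
    (hEA : EA ⊆ VA ×ˢ VA) (hEB : EB ⊆ VB ×ˢ VB)
    (f : α → β) (hbij : Set.BijOn f ↑VA ↑VB)
    (hiso : ∀ i ∈ VA, ∀ j ∈ VA, ((i, j) ∈ EA ↔ (f i, f j) ∈ EB)) :
    ∀ k : ℕ, ∀ i ∈ VA, nmIter VA EA VB EB k i (f i) = 1 := by
  classical
  intro k
  induction k with
  | zero => intro i hi; simp [nmIter]
  | succ k ih =>
    intro i hi
    have hx1 : ∀ a b, nmIter VA EA VB EB k a b ≤ 1 :=
      fun a b => (nmIter_bdd VA EA VB EB k a b).2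
    have hfi : f i ∈ VB := hbij.mapsTo hi
    have hin : inNbrs VB EB (f i) = (inNbrs VA EA i).image f := by
      ext b
      simp only [inNbrs, Finset.mem_filter, Finset.mem_image]
      constructor
      · rintro ⟨hbV, hbe⟩
        obtain ⟨a, ha, rfl⟩ := hbij.surjOn hbV
        have ha' : a ∈ VA := ha
        exact ⟨a, ⟨ha', (hiso a ha' i hi).mpr hbe⟩, rfl⟩
      · rintro ⟨a, ⟨haV, hae⟩, rfl⟩
        exact ⟨hbij.mapsTo haV, (hiso a haV i hi).mp hae⟩
    have hout : outNbrs VB EB (f i) = (outNbrs VA EA i).image f := by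
      ext b
      simp only [outNbrs, Finset.mem_filter, Finset.mem_image]
      constructor
      · rintro ⟨hbV, hbe⟩
        obtain ⟨a, ha, rfl⟩ := hbij.surjOn hbV
        have ha' : a ∈ VA := ha
        exact ⟨a, ⟨ha', (hiso i hi a ha').mpr hbe⟩, rfl⟩
      · rintro ⟨a, ⟨haV, hae⟩, rfl⟩
        exact ⟨hbij.mapsTo haV, (hiso i hi a haV).mp hae⟩
    have hsubIn : (inNbrs VA EA i : Set α) ⊆ ↑VA := by
      intro a ha
      exact (Finset.mem_filter.mp (Finset.mem_coe.mp ha)).1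
    have hsubOut : (outNbrs VA EA i : Set α) ⊆ ↑VA := by
      intro a ha
      exact (Finset.mem_filter.mp (Finset.mem_coe.mp ha)).1
    have hinjIn : Set.InjOn f ↑(inNbrs VA EA i) := hbij.injOn.mono hsubIn
    have hinjOut : Set.InjOn f ↑(outNbrs VA EA i) := hbij.injOn.mono hsubOut
    have hxIn : ∀ a ∈ inNbrs VA EA i, nmIter VA EA VB EB k a (f a) = 1 :=
      fun a ha => ih a (Finset.mem_filter.mp ha).1
    have hxOut : ∀ a ∈ outNbrs VA EA i, nmIter VA EA VB EB k a (f a) = 1 :=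
      fun a ha => ih a (Finset.mem_filter.mp ha).1
    have hsIn : sIn VA EA VB EB (nmIter VA EA VB EB k) i (f i) = 1 := by
      rw [sIn, hin, Finset.card_image_of_injOn hinjIn, max_self]
      by_cases h : (inNbrs VA EA i).card = 0
      · simp [h]
      · rw [if_neg h, optWeight_image _ f _ hinjIn hx1 hxIn]
        have : ((inNbrs VA EA i).card : ℝ) ≠ 0 := Nat.cast_ne_zero.mpr h
        field_simp
        exact (max_self _).symm
    have hsOut : sOut VA EA VB EB (nmIter VA EA VB EB k) i (f i) = 1 := by
      rw [sOut, hout, Finset.card_image_of_injOn hinjOut, max_self]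
      by_cases h : (outNbrs VA EA i).card = 0
      · simp [h]
      · rw [if_neg h, optWeight_image _ f _ hinjOut hx1 hxOut]
        have : ((outNbrs VA EA i).card : ℝ) ≠ 0 := Nat.cast_ne_zero.mpr h
        field_simp
        exact (max_self _).symm
    show (sIn VA EA VB EB (nmIter VA EA VB EB k) i (f i) +
      sOut VA EA VB EB (nmIter VA EA VB EB k) i (f i)) / 2 = 1
    rw [hsIn, hsOut]; norm_num
end
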